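/- arXiv:math/9201230 — 4 statements merged into one kernel-verified Lean document; each statement's English description precedes it below -/
import Mathlib

section
/- Let 1 < p < 2 < r < ∞ and set p' = p/(p−1). Let (k_n) be a sequence of positive integers and define α_n = √n · k_n^{(1/p'−1/p)/2} for n ≥ 1. Let l and j be positive integers with 2∑_{i=1}^{l−1} i^{r/2} k_i^{r/2} ≤ j ≤ k_l^{1−p/2} / l^{p/2}. Then for all real numbers (x_i)_{i=1}^l with 0 ≤ x_i ≤ k_i for 1 ≤ i < l and 0 ≤ x_l ≤ j − ∑_{i=1}^{l−1} x_i, one has 0 ≤ ∑_{i=1}^l α_i^r x_i^{r/p} ≤ j/2 + 2. -/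
open Filter Topology

noncomputable section

/-- An operator between normed spaces is *weakly compact* if the image of the closed unit
ball is relatively compact in the weak topology of the codomain. -/
def IsWeaklyCompactOperator {X Y : Type*} [NormedAddCommGroup X] [NormedSpace ℝ X]
    [NormedAddCommGroup Y] [NormedSpace ℝ Y] (T : X →L[ℝ] Y) : Prop :=
  IsCompact (closure (toWeakSpace ℝ Y '' (T '' Metric.closedBall 0 1)))

/-- An operator between normed spaces is *compact* if the image of the closed unit ball is
relatively norm-compact. -/
def IsCompactOp {X Y : Type*} [NormedAddCommGroup X] [NormedSpace ℝ X]
    [NormedAddCommGroup Y] [NormedSpace ℝ Y] (T : X →L[ℝ] Y) : Prop :=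
  IsCompact (closure (T '' Metric.closedBall 0 1))

/-- A Banach space has *Property (w)* if every operator into its dual is weakly compact. -/
def PropertyW (X : Type*) [NormedAddCommGroup X] [NormedSpace ℝ X] : Prop :=
  ∀ T : X →L[ℝ] (X →L[ℝ] ℝ), IsWeaklyCompactOperator T

/-- A normed space is *weakly sequentially complete* if every weakly Cauchy sequence is
weakly convergent. -/
def WeaklySeqComplete (X : Type*) [NormedAddCommGroup X] [NormedSpace ℝ X] : Prop :=
  ∀ x : ℕ → X,
    (∀ f : X →L[ℝ] ℝ, ∃ L : ℝ, Tendsto (fun n => f (x n)) atTop (𝓝 L)) →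
    ∃ x₀ : X, ∀ f : X →L[ℝ] ℝ, Tendsto (fun n => f (x n)) atTop (𝓝 (f x₀))

/-- A normed space is reflexive if the canonical embedding into the double dual is
surjective. -/
def IsReflexiveSpace (X : Type*) [NormedAddCommGroup X] [NormedSpace ℝ X] : Prop :=
  Function.Surjective (NormedSpace.inclusionInDoubleDual ℝ X)

/-- `(e i)` is a normalized unconditional basic sequence. -/
def IsNormalizedUnconditionalBasic {E : Type*} [NormedAddCommGroup E] [NormedSpace ℝ E]
    (e : ℕ → E) : Prop :=
  (∀ i, ‖e i‖ = 1) ∧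
  ∃ C : ℝ, ∀ S F : Finset ℕ, S ⊆ F → ∀ a : ℕ → ℝ,
    ‖∑ i ∈ S, a i • e i‖ ≤ C * ‖∑ i ∈ F, a i • e i‖

/-- `(x i)` dominates `(y i)`. -/
def Dominates {X Y : Type*} [NormedAddCommGroup X] [NormedSpace ℝ X]
    [NormedAddCommGroup Y] [NormedSpace ℝ Y] (x : ℕ → X) (y : ℕ → Y) : Prop :=
  ∃ C : ℝ, ∀ (s : Finset ℕ) (a : ℕ → ℝ),
    ‖∑ i ∈ s, a i • y i‖ ≤ C * ‖∑ i ∈ s, a i • x i‖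

/-- Two sequences are equivalent if each dominates the other. -/
def EquivalentSeq {X Y : Type*} [NormedAddCommGroup X] [NormedSpace ℝ X]
    [NormedAddCommGroup Y] [NormedSpace ℝ Y] (x : ℕ → X) (y : ℕ → Y) : Prop :=
  Dominates x y ∧ Dominates y x

/-- `(v n)` is a block basis of `(e i)`. -/
def IsBlockBasis {E : Type*} [NormedAddCommGroup E] [NormedSpace ℝ E]
    (e v : ℕ → E) : Prop :=
  ∃ q : ℕ → ℕ, StrictMono q ∧ ∃ a : ℕ → ℝ,
    ∀ n, v n ≠ 0 ∧ v n = ∑ i ∈ Finset.Ico (q n) (q (n + 1)), a i • e i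

/-- A sequence is semi-normalized. -/
def SemiNormalized {E : Type*} [NormedAddCommGroup E] (x : ℕ → E) : Prop :=
  ∃ c C : ℝ, 0 < c ∧ ∀ i, c ≤ ‖x i‖ ∧ ‖x i‖ ≤ C

/-- `(e i)` is right dominant. -/
def RightDominantBound {E : Type*} [NormedAddCommGroup E] [NormedSpace ℝ E]
    (e : ℕ → E) : Prop :=
  ∃ C : ℝ, ∀ m n : ℕ → ℕ, (∀ i, m i ≤ n i) → (∀ i, n i < m (i + 1)) →
    ∀ (s : Finset ℕ) (a : ℕ → ℝ),
      ‖∑ i ∈ s, a i • e (m i)‖ ≤ C * ‖∑ i ∈ s, a i • e (n i)‖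

/-- The James norm associated to `(e i)` of a (finitely supported) scalar sequence. -/
def jamesNorm {E : Type*} [NormedAddCommGroup E] [NormedSpace ℝ E]
    (e : ℕ → E) (a : ℕ → ℝ) : ℝ :=
  sSup { x : ℝ | ∃ (k : ℕ) (p : ℕ → ℕ), 0 < k ∧ p 0 = 0 ∧ StrictMono p ∧
    x = ‖∑ i ∈ Finset.range k, (∑ j ∈ Finset.Ico (p i) (p (i + 1)), a j) • e (p i)‖ }

/-- `X`, together with the sequence `(u i)`, is the James-type space over `(e i)`. -/
def IsJamesSpace {E X : Type*} [NormedAddCommGroup E] [NormedSpace ℝ E]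
    [NormedAddCommGroup X] [NormedSpace ℝ X] (e : ℕ → E) (u : ℕ → X) : Prop :=
  Dense (Submodule.span ℝ (Set.range u) : Set X) ∧
  ∀ a : ℕ →₀ ℝ, ‖∑ i ∈ a.support, a i • u i‖ = jamesNorm e (a : ℕ → ℝ)

/-- `(e i)` is shrinking: the span of the biorthogonal functionals is dense in the dual of
the closed linear span of `(e i)`. -/
def IsShrinking {E : Type*} [NormedAddCommGroup E] [NormedSpace ℝ E] (e : ℕ → E) : Prop :=
  ∃ e' : ℕ → ((Submodule.span ℝ (Set.range e)).topologicalClosure →L[ℝ] ℝ),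
    (∀ i j, e' i ⟨e j, Submodule.le_topologicalClosure _
        (Submodule.subset_span (Set.mem_range_self j))⟩ = if i = j then 1 else 0) ∧
    Dense (Submodule.span ℝ (Set.range e') :
      Set ((Submodule.span ℝ (Set.range e)).topologicalClosure →L[ℝ] ℝ))

/-- `E` satisfies an upper `p`-estimate with respect to the unconditional basis `(e i)`. -/
def UpperPEstimate {E : Type*} [NormedAddCommGroup E] [NormedSpace ℝ E]
    (e : ℕ → E) (p : ℝ) : Prop :=
  ∃ C : ℝ, ∀ (n : ℕ) (x : ℕ → E) (s : ℕ → Finset ℕ) (a : ℕ → ℕ → ℝ),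
    (∀ k, k < n → x k = ∑ i ∈ s k, a k i • e i) →
    (∀ k l, k < n → l < n → k ≠ l → Disjoint (s k) (s l)) →
    ‖∑ k ∈ Finset.range n, x k‖ ≤ C * (∑ k ∈ Finset.range n, ‖x k‖ ^ p) ^ (1 / p)

/-- `(e i)` is subsymmetric: unconditional and equivalent to all of its subsequences. -/
def IsSubsymmetric {E : Type*} [NormedAddCommGroup E] [NormedSpace ℝ E] (e : ℕ → E) : Prop :=
  (∃ C : ℝ, ∀ S F : Finset ℕ, S ⊆ F → ∀ a : ℕ → ℝ,
    ‖∑ i ∈ S, a i • e i‖ ≤ C * ‖∑ i ∈ F, a i • e i‖) ∧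
  ∀ φ : ℕ → ℕ, StrictMono φ → EquivalentSeq e (e ∘ φ)

/-- `(e i)` is a symmetric basic sequence: equivalent to all of its permutations. -/
def IsSymmetricSeq {E : Type*} [NormedAddCommGroup E] [NormedSpace ℝ E] (e : ℕ → E) : Prop :=
  ∀ σ : Equiv.Perm ℕ, EquivalentSeq e (fun i => e (σ i))

/-- A topological space is scattered if every nonempty closed subset has a point isolated
in that subset. -/
def Scattered (K : Type*) [TopologicalSpace K] : Prop :=
  ∀ C : Set K, C.Nonempty → IsClosed C → ∃ x ∈ C, ∃ U : Set K, IsOpen U ∧ U ∩ C = {x}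

end

/-- Lemma 7 of the paper. -/
theorem statement9 (p r : ℝ) (hp1 : 1 < p) (hp2 : p < 2) (hr2 : 2 < r)
    (k : ℕ → ℕ) (hk : ∀ n, 0 < k n)
    (α : ℕ → ℝ)
    (hα : ∀ n : ℕ, 1 ≤ n →
      α n = Real.sqrt (n : ℝ) * (k n : ℝ) ^ ((1 / (p / (p - 1)) - 1 / p) / 2))
    (l j : ℕ) (hl : 1 ≤ l) (hj : 1 ≤ j)
    (hj1 : 2 * ∑ i ∈ Finset.Icc 1 (l - 1), (i : ℝ) ^ (r / 2) * (k i : ℝ) ^ (r / 2) ≤ (j : ℝ))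
    (hj2 : (j : ℝ) ≤ (k l : ℝ) ^ (1 - p / 2) / (l : ℝ) ^ (p / 2))
    (x : ℕ → ℝ)
    (hx0 : ∀ i, 1 ≤ i → i ≤ l → 0 ≤ x i)
    (hxk : ∀ i, 1 ≤ i → i < l → x i ≤ (k i : ℝ))
    (hxl : x l ≤ (j : ℝ) - ∑ i ∈ Finset.Icc 1 (l - 1), x i) :
    0 ≤ ∑ i ∈ Finset.Icc 1 l, α i ^ r * x i ^ (r / p) ∧
      ∑ i ∈ Finset.Icc 1 l, α i ^ r * x i ^ (r / p) ≤ (j : ℝ) / 2 + 2 := by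
  obtain ⟨m, rfl⟩ : ∃ m, l = m + 1 := ⟨l - 1, (Nat.succ_pred_eq_of_pos hl).symm⟩
  simp only [Nat.add_sub_cancel] at hj1 hxl
  have hp0 : (0:ℝ) < p := by linarith
  have hp1' : p - 1 ≠ 0 := by linarith
  have hr0 : (0:ℝ) < r := by linarith
  have hrp : (0:ℝ) < r / p := by positivity
  have hkpos : ∀ n, (0:ℝ) < (k n : ℝ) := fun n => by exact_mod_cast hk n
  -- rewrite α n ^ r
  have hexp : (1 / (p / (p - 1)) - 1 / p) / 2 * r = r / 2 - r / p := by
    rw [one_div_div]; field_simp; ring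
  have hαr : ∀ n, 1 ≤ n → α n ^ r = (n:ℝ) ^ (r/2) * (k n:ℝ) ^ (r/2 - r/p) := by
    intro n hn
    have hn0 : (0:ℝ) ≤ (n:ℝ) := Nat.cast_nonneg n
    rw [hα n hn, Real.mul_rpow (Real.sqrt_nonneg _) (Real.rpow_nonneg (hkpos n).le _),
      Real.sqrt_eq_rpow, ← Real.rpow_mul hn0, ← Real.rpow_mul (hkpos n).le, hexp,
      show (1/2 : ℝ) * r = r / 2 by ring]
  have hmem : ∀ i ∈ Finset.Icc 1 (m+1), 1 ≤ i ∧ i ≤ m + 1 := fun i hi => Finset.mem_Icc.1 hi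
  constructor
  · refine Finset.sum_nonneg fun i hi => ?_
    obtain ⟨h1, h2⟩ := hmem i hi
    rw [hαr i h1]
    have := hx0 i h1 h2
    positivity
  · rw [Finset.sum_Icc_succ_top (Nat.le_add_left 1 m)]
    have hsum1 : ∑ i ∈ Finset.Icc 1 m, α i ^ r * x i ^ (r / p)
        ≤ ∑ i ∈ Finset.Icc 1 m, (i : ℝ) ^ (r / 2) * (k i : ℝ) ^ (r / 2) := by
      refine Finset.sum_le_sum fun i hi => ?_
      obtain ⟨h1, h2⟩ := Finset.mem_Icc.1 hi
      rw [hαr i h1, mul_assoc]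
      refine mul_le_mul_of_nonneg_left ?_ (Real.rpow_nonneg (Nat.cast_nonneg i) _)
      calc (k i:ℝ) ^ (r/2 - r/p) * x i ^ (r/p)
          ≤ (k i:ℝ) ^ (r/2 - r/p) * (k i:ℝ) ^ (r/p) := by
            refine mul_le_mul_of_nonneg_left ?_ (Real.rpow_nonneg (hkpos i).le _)
            exact Real.rpow_le_rpow (hx0 i h1 (h2.trans (Nat.le_succ m)))
              (hxk i h1 (Nat.lt_succ_of_le h2)) hrp.le
        _ = (k i:ℝ) ^ (r/2) := by
            rw [← Real.rpow_add (hkpos i)]; ring_nf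
    -- last term ≤ 1
    have hL0 : (0:ℝ) < ((m+1:ℕ):ℝ) := by positivity
    have hK0 : (0:ℝ) < (k (m+1) : ℝ) := hkpos _
    have hxm0 : 0 ≤ x (m+1) := hx0 _ (Nat.le_add_left 1 m) le_rfl
    have hxj : x (m+1) ≤ (j:ℝ) := by
      have hs : 0 ≤ ∑ i ∈ Finset.Icc 1 m, x i :=
        Finset.sum_nonneg fun i hi => hx0 i (Finset.mem_Icc.1 hi).1
          ((Finset.mem_Icc.1 hi).2.trans (Nat.le_succ m))
      linarith
    have hlast : α (m+1) ^ r * x (m+1) ^ (r / p) ≤ 1 := by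
      rw [hαr (m+1) (Nat.le_add_left 1 m)]
      have h1 : x (m+1) ^ (r/p) ≤ ((k (m+1):ℝ) ^ (1 - p/2) / ((m+1:ℕ):ℝ) ^ (p/2)) ^ (r/p) :=
        Real.rpow_le_rpow hxm0 (hxj.trans hj2) hrp.le
      have h2 : ((k (m+1):ℝ) ^ (1 - p/2) / ((m+1:ℕ):ℝ) ^ (p/2)) ^ (r/p)
          = (k (m+1):ℝ) ^ (r/p - r/2) / ((m+1:ℕ):ℝ) ^ (r/2) := by
        rw [Real.div_rpow (Real.rpow_nonneg hK0.le _) (Real.rpow_nonneg hL0.le _),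
          ← Real.rpow_mul hK0.le, ← Real.rpow_mul hL0.le]
        congr 1
        · congr 1; field_simp
        · congr 1; field_simp
      calc ((m+1:ℕ):ℝ) ^ (r/2) * (k (m+1):ℝ) ^ (r/2 - r/p) * x (m+1) ^ (r/p)
          ≤ ((m+1:ℕ):ℝ) ^ (r/2) * (k (m+1):ℝ) ^ (r/2 - r/p)
            * ((k (m+1):ℝ) ^ (r/p - r/2) / ((m+1:ℕ):ℝ) ^ (r/2)) := by
            rw [← h2]
            exact mul_le_mul_of_nonneg_left h1
              (mul_nonneg (Real.rpow_nonneg hL0.le _) (Real.rpow_nonneg hK0.le _))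
        _ = ((k (m+1):ℝ) ^ (r/2 - r/p) * (k (m+1):ℝ) ^ (r/p - r/2))
            * (((m+1:ℕ):ℝ) ^ (r/2) / ((m+1:ℕ):ℝ) ^ (r/2)) := by ring
        _ = 1 := by
            rw [← Real.rpow_add hK0, div_self (ne_of_gt (Real.rpow_pos_of_pos hL0 _))]
            norm_num
    have hj12 : ∑ i ∈ Finset.Icc 1 m, (i : ℝ) ^ (r / 2) * (k i : ℝ) ^ (r / 2) ≤ (j:ℝ)/2 := by
      linarith
    linarith
end

section
/- Let 1 < p < 2 < r < ∞ and set p' = p/(p−1). Let (k_n) be a sequence of positive integers satisfying ((n+1)/n)^{r/2} · (k_n/k_{n+1})^{(1/p−1/p')r/2} ≤ 1/2 for all n ≥ 1, and define α_n = √n · k_n^{(1/p'−1/p)/2}. Then for all integers i > l ≥ 1 and every real number j with 0 ≤ j ≤ k_l^{1−p/2} / l^{p/2}, one has α_i · j^{1/p} ≤ 2^{−(i−l)/r}. -/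
open Filter Topology

/-- a computation from the Example of the paper. -/
theorem statement10 (p r : ℝ) (hp1 : 1 < p) (hp2 : p < 2) (hr2 : 2 < r)
    (k : ℕ → ℕ) (hk : ∀ n, 0 < k n)
    (hfrac : ∀ n : ℕ, 1 ≤ n →
      (((n : ℝ) + 1) / (n : ℝ)) ^ (r / 2) *
        ((k n : ℝ) / (k (n + 1) : ℝ)) ^ ((1 / p - 1 / (p / (p - 1))) * r / 2) ≤ 1 / 2)
    (α : ℕ → ℝ)
    (hα : ∀ n : ℕ, 1 ≤ n →
      α n = Real.sqrt (n : ℝ) * (k n : ℝ) ^ ((1 / (p / (p - 1)) - 1 / p) / 2))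
    (i l : ℕ) (hl : 1 ≤ l) (hil : l < i)
    (j : ℝ) (hj0 : 0 ≤ j) (hj : j ≤ (k l : ℝ) ^ (1 - p / 2) / (l : ℝ) ^ (p / 2)) :
    α i * j ^ (1 / p) ≤ (2 : ℝ) ^ (-(((i : ℝ) - (l : ℝ)) / r)) := by
  have hp0 : (0:ℝ) < p := by linarith
  have hr0 : (0:ℝ) < r := by linarith
  have hK : ∀ n, (0:ℝ) < (k n : ℝ) := fun n => by exact_mod_cast hk n
  set t : ℝ := (2 - p) / p with ht_def
  have ht : 0 < t := div_pos (by linarith) hp0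
  set c : ℝ := (2:ℝ) ^ (-(2/r)) with hc_def
  have hc0 : 0 < c := Real.rpow_pos_of_pos two_pos _
  set g : ℕ → ℝ := fun n => (n:ℝ) * (k n : ℝ) ^ (-t) with hg_def
  have hgpos : ∀ n, 1 ≤ n → 0 < g n := by
    intro n hn
    exact mul_pos (by exact_mod_cast Nat.cast_pos.mpr hn)
      (Real.rpow_pos_of_pos (hK n) _)
  have hexp : 1 / p - 1 / (p / (p - 1)) = t := by
    rw [ht_def]; field_simp; ring
  have hstep : ∀ n, 1 ≤ n → g (n + 1) ≤ c * g n := by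
    intro n hn
    have hN : (0:ℝ) < (n:ℝ) := Nat.cast_pos.mpr hn
    have h1 := hfrac n hn
    rw [hexp, show t * r / 2 = t * (r/2) by ring] at h1
    set A : ℝ := ((n:ℝ)+1)/(n:ℝ) with hA_def
    set B : ℝ := (k n : ℝ) / (k (n+1) : ℝ) with hB_def
    have hA0 : 0 < A := by positivity
    have hB0 : 0 < B := div_pos (hK n) (hK (n+1))
    have hX : (A * B ^ t) ^ (r/2) ≤ 1/2 := by
      rw [Real.mul_rpow hA0.le (Real.rpow_nonneg hB0.le t), ← Real.rpow_mul hB0.le]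
      exact h1
    have hXc : A * B ^ t ≤ c := by
      have h2 := Real.rpow_le_rpow (by positivity) hX (by positivity : (0:ℝ) ≤ 2/r)
      rw [← Real.rpow_mul (by positivity)] at h2
      rw [show r/2 * (2/r) = 1 by field_simp, Real.rpow_one] at h2
      calc A * B^t ≤ (1/2 : ℝ) ^ (2/r) := h2
        _ = c := by
          rw [hc_def, one_div, Real.inv_rpow (by norm_num), ← Real.rpow_neg (by norm_num)]
    have hgeq : g (n+1) = (A * B ^ t) * g n := by
      have hBt : B ^ t = (k n : ℝ)^t / (k (n+1) : ℝ)^t :=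
        Real.div_rpow (hK n).le (hK (n+1)).le _
      simp only [hg_def, Nat.cast_add, Nat.cast_one]
      rw [hBt, hA_def, Real.rpow_neg (hK n).le, Real.rpow_neg (hK (n+1)).le]
      have h1' : ((k n:ℝ))^t ≠ 0 := ne_of_gt (Real.rpow_pos_of_pos (hK n) t)
      have h2' : ((k (n+1):ℝ))^t ≠ 0 := ne_of_gt (Real.rpow_pos_of_pos (hK (n+1)) t)
      field_simp
    rw [hgeq]
    exact mul_le_mul_of_nonneg_right hXc (hgpos n hn).le
  have hind : ∀ m : ℕ, g (l + m) ≤ c ^ m * g l := by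
    intro m
    induction m with
    | zero => simp
    | succ m ih =>
      have h := hstep (l + m) (le_trans hl (Nat.le_add_right l m))
      calc g (l + (m+1)) = g ((l+m)+1) := by rw [Nat.add_assoc]
        _ ≤ c * g (l+m) := h
        _ ≤ c * (c^m * g l) := mul_le_mul_of_nonneg_left ih hc0.le
        _ = c^(m+1) * g l := by ring
  obtain ⟨m, hm⟩ : ∃ m : ℕ, i = l + m := ⟨i - l, by omega⟩
  have hgi : g i ≤ c ^ m * g l := by rw [hm]; exact hind m
  have hi1 : 1 ≤ i := le_trans hl hil.le
  have he : (1 / (p / (p - 1)) - 1 / p) / 2 = -t / 2 := by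
    rw [ht_def]; field_simp; ring
  have hαi : α i = Real.sqrt i * (k i : ℝ) ^ (-t/2) := by rw [hα i hi1, he]
  have hRHSpos : (0:ℝ) < (2:ℝ) ^ (-(((i:ℝ)-(l:ℝ))/r)) := Real.rpow_pos_of_pos two_pos _
  rcases eq_or_lt_of_le hj0 with rfl | hj0'
  · rw [Real.zero_rpow (by positivity : (1:ℝ)/p ≠ 0), mul_zero]
    exact hRHSpos.le
  · have hLHS0 : 0 ≤ α i * j ^ (1/p) := by
      rw [hαi]
      positivity
    rw [← pow_le_pow_iff_left₀ hLHS0 hRHSpos.le (two_ne_zero)]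
    have hL : (α i * j ^ (1/p))^2 = g i * j ^ (2/p) := by
      have h1 : ((k i:ℝ) ^ (-t/2))^2 = (k i:ℝ)^(-t) := by
        rw [← Real.rpow_natCast ((k i:ℝ) ^ (-t/2)) 2, ← Real.rpow_mul (hK i).le]
        norm_num
      have h2 : (j ^ ((1:ℝ)/p))^2 = j ^ (2/p) := by
        rw [← Real.rpow_natCast (j ^ ((1:ℝ)/p)) 2, ← Real.rpow_mul hj0'.le,
          show (1:ℝ)/p * ((2:ℕ):ℝ) = 2/p by push_cast; ring]
      rw [hαi, mul_pow, mul_pow, Real.sq_sqrt (Nat.cast_nonneg i), h1, h2]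
    have hl0 : (0:ℝ) < (l:ℝ) := Nat.cast_pos.mpr hl
    have hj2 : j ^ ((2:ℝ)/p) ≤ (g l)⁻¹ := by
      have h3 : j ^ ((2:ℝ)/p) ≤ ((k l:ℝ) ^ (1 - p/2) / (l:ℝ) ^ (p/2)) ^ ((2:ℝ)/p) :=
        Real.rpow_le_rpow hj0 hj (by positivity)
      have h4 : ((k l:ℝ) ^ (1 - p/2) / (l:ℝ) ^ (p/2)) ^ ((2:ℝ)/p) = (g l)⁻¹ := by
        rw [Real.div_rpow (Real.rpow_nonneg (hK l).le _) (Real.rpow_nonneg hl0.le _),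
            ← Real.rpow_mul (hK l).le, ← Real.rpow_mul hl0.le]
        rw [show (1 - p/2) * (2/p) = t by rw [ht_def]; field_simp,
            show p/2 * (2/p) = 1 by field_simp, Real.rpow_one]
        simp only [hg_def]
        rw [mul_inv, Real.rpow_neg (hK l).le, inv_inv]
        ring
      exact h3.trans_eq h4
    have hgl := hgpos l hl
    have hgipos := hgpos i hi1
    have hchain : g i * j ^ ((2:ℝ)/p) ≤ c ^ m := by
      calc g i * j ^ ((2:ℝ)/p) ≤ g i * (g l)⁻¹ :=
            mul_le_mul_of_nonneg_left hj2 hgipos.le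
        _ ≤ (c^m * g l) * (g l)⁻¹ :=
            mul_le_mul_of_nonneg_right hgi (inv_nonneg.mpr hgl.le)
        _ = c^m := by field_simp
    have hR : ((2:ℝ) ^ (-(((i:ℝ)-(l:ℝ))/r)))^2 = c ^ m := by
      rw [← Real.rpow_natCast ((2:ℝ) ^ (-(((i:ℝ)-(l:ℝ))/r))) 2,
          ← Real.rpow_mul (by norm_num : (0:ℝ) ≤ 2)]
      rw [hc_def, ← Real.rpow_natCast ((2:ℝ) ^ (-(2/r))) m,
          ← Real.rpow_mul (by norm_num : (0:ℝ) ≤ 2)]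
      congr 1
      have hmc : (m:ℝ) = (i:ℝ) - (l:ℝ) := by
        have : (i:ℝ) = (l:ℝ) + (m:ℝ) := by exact_mod_cast congrArg (Nat.cast : ℕ → ℝ) hm
        linarith
      rw [hmc]
      field_simp
      ring
    rw [hL, hR]
    exact hchain
end

section
/- Let 1 < p < 2 < r < ∞ and set p' = p/(p−1). Let (k_n) be a sequence of positive integers satisfying, for all n ≥ 1, both 1 + 2∑_{i=1}^{n−1} i^{r/2} k_i^{r/2} ≤ k_n^{1−p/2} / n^{p/2} and ((n+1)/n)^{r/2} · (k_n/k_{n+1})^{(1/p−1/p')r/2} ≤ 1/2, and define α_n = √n · k_n^{(1/p'−1/p)/2}. Let l and j be positive integers with 2∑_{i=1}^{l−1} i^{r/2} k_i^{r/2} ≤ j ≤ k_l^{1−p/2} / l^{p/2}. Then for every sequence (j_i)_{i≥1} of nonnegative integers with ∑_{i≥1} j_i = j and j_i ≤ k_i for all i, one has ∑_{i=1}^∞ α_i^r j_i^{r/p} ≤ j/2 + 3. -/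
open Filter Topology

/-- the estimate `∑ αᵢʳ jᵢ^{r/p} ≤ j/2 + 3` from the Example. -/
theorem statement11 (p r : ℝ) (hp1 : 1 < p) (hp2 : p < 2) (hr2 : 2 < r)
    (k : ℕ → ℕ) (hk : ∀ n, 0 < k n)
    (hsum : ∀ n : ℕ, 1 ≤ n →
      1 + 2 * ∑ i ∈ Finset.Icc 1 (n - 1), (i : ℝ) ^ (r / 2) * (k i : ℝ) ^ (r / 2)
        ≤ (k n : ℝ) ^ (1 - p / 2) / (n : ℝ) ^ (p / 2))
    (hfrac : ∀ n : ℕ, 1 ≤ n →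
      (((n : ℝ) + 1) / (n : ℝ)) ^ (r / 2) *
        ((k n : ℝ) / (k (n + 1) : ℝ)) ^ ((1 / p - 1 / (p / (p - 1))) * r / 2) ≤ 1 / 2)
    (α : ℕ → ℝ)
    (hα : ∀ n : ℕ, 1 ≤ n →
      α n = Real.sqrt (n : ℝ) * (k n : ℝ) ^ ((1 / (p / (p - 1)) - 1 / p) / 2))
    (l j : ℕ) (hl : 1 ≤ l) (hj : 1 ≤ j)
    (hj1 : 2 * ∑ i ∈ Finset.Icc 1 (l - 1), (i : ℝ) ^ (r / 2) * (k i : ℝ) ^ (r / 2) ≤ (j : ℝ))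
    (hj2 : (j : ℝ) ≤ (k l : ℝ) ^ (1 - p / 2) / (l : ℝ) ^ (p / 2))
    (J : ℕ → ℕ)
    (hJsum : HasSum (fun i : ℕ => (J (i + 1) : ℝ)) (j : ℝ))
    (hJk : ∀ i : ℕ, 1 ≤ i → J i ≤ k i) :
    ∑' i : ℕ, α (i + 1) ^ r * (J (i + 1) : ℝ) ^ (r / p) ≤ (j : ℝ) / 2 + 3 := by
  have hp0 : (0:ℝ) < p := by linarith
  have hpne : p ≠ 0 := ne_of_gt hp0
  have hp1' : (0:ℝ) < p - 1 := by linarith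
  have hp1ne : p - 1 ≠ 0 := ne_of_gt hp1'
  have hr0 : (0:ℝ) < r := by linarith
  have hrp : (0:ℝ) < r / p := by positivity
  set c : ℝ := (1 / (p / (p - 1)) - 1 / p) / 2 with hc
  set e : ℝ := c * r with he
  have hkpos : ∀ n, (0:ℝ) < (k n : ℝ) := fun n => by exact_mod_cast hk n
  have h1 : e + r / p = r / 2 := by rw [he, hc]; field_simp; ring
  have h2 : (1 - p / 2) * (r / p) = -e := by rw [he, hc]; field_simp; ring
  have h2' : (p / 2) * (r / p) = r / 2 := by field_simp
  have h3 : (1 / p - 1 / (p / (p - 1))) * r / 2 = -e := by rw [he, hc]; field_simp; ring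
  have hαr : ∀ n : ℕ, 1 ≤ n → α n ^ r = (n : ℝ) ^ (r / 2) * (k n : ℝ) ^ e := by
    intro n hn
    have hn0 : (0:ℝ) < (n : ℝ) := by exact_mod_cast hn
    rw [hα n hn, Real.mul_rpow (Real.sqrt_nonneg _) (Real.rpow_nonneg (hkpos n).le _),
      Real.sqrt_eq_rpow, ← Real.rpow_mul hn0.le, ← Real.rpow_mul (hkpos n).le,
      one_div_mul_eq_div]
  have hαnonneg : ∀ n : ℕ, 1 ≤ n → 0 ≤ α n ^ r := by
    intro n hn; rw [hαr n hn]; positivity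
  have hstep : ∀ n : ℕ, 1 ≤ n → α (n + 1) ^ r ≤ α n ^ r / 2 := by
    intro n hn
    have hn0 : (0:ℝ) < (n : ℝ) := by exact_mod_cast hn
    have hn10 : (0:ℝ) < (n : ℝ) + 1 := by linarith
    have hkn := hkpos n
    have hkn1 := hkpos (n + 1)
    have hX := hfrac n hn
    rw [h3] at hX
    have hid : α (n + 1) ^ r
        = (((n:ℝ) + 1) / (n:ℝ)) ^ (r / 2) * ((k n : ℝ) / (k (n + 1) : ℝ)) ^ (-e)
          * (α n ^ r) := by
      rw [hαr n hn, hαr (n + 1) (by omega),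
        Real.div_rpow hn10.le hn0.le, Real.div_rpow hkn.le hkn1.le,
        Real.rpow_neg hkn.le, Real.rpow_neg hkn1.le]
      have ha : (0:ℝ) < (n : ℝ) ^ (r / 2) := Real.rpow_pos_of_pos hn0 _
      have hb : (0:ℝ) < (k n : ℝ) ^ e := Real.rpow_pos_of_pos hkn _
      have hB : (0:ℝ) < (k (n + 1) : ℝ) ^ e := Real.rpow_pos_of_pos hkn1 _
      push_cast
      field_simp
    rw [hid]
    have := mul_le_mul_of_nonneg_right hX (hαnonneg n hn)
    linarith
  have hdecay : ∀ m : ℕ, α (l + m) ^ r ≤ α l ^ r * (1/2 : ℝ) ^ m := by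
    intro m
    induction m with
    | zero => simp
    | succ m ih =>
      have h := hstep (l + m) (by omega)
      calc α (l + (m + 1)) ^ r = α (l + m + 1) ^ r := by ring_nf
        _ ≤ α (l + m) ^ r / 2 := h
        _ ≤ (α l ^ r * (1/2 : ℝ) ^ m) / 2 := by linarith
        _ = α l ^ r * (1/2 : ℝ) ^ (m + 1) := by ring
  have hl0 : (0:ℝ) < (l : ℝ) := by exact_mod_cast hl
  have hkl := hkpos l
  have hαl : α l ^ r * (j : ℝ) ^ (r / p) ≤ 1 := by
    have hjb : (j : ℝ) ^ (r / p) ≤ ((k l : ℝ) ^ (1 - p / 2) / (l : ℝ) ^ (p / 2)) ^ (r / p) :=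
      Real.rpow_le_rpow (by positivity) hj2 hrp.le
    have heq : α l ^ r * (((k l : ℝ) ^ (1 - p / 2) / (l : ℝ) ^ (p / 2)) ^ (r / p)) = 1 := by
      rw [hαr l hl, Real.div_rpow (by positivity) (by positivity),
        ← Real.rpow_mul hkl.le, ← Real.rpow_mul hl0.le, h2, h2',
        Real.rpow_neg hkl.le]
      have ha : (0:ℝ) < (l : ℝ) ^ (r / 2) := Real.rpow_pos_of_pos hl0 _
      have hb : (0:ℝ) < (k l : ℝ) ^ e := Real.rpow_pos_of_pos hkl _
      field_simp
    calc α l ^ r * (j : ℝ) ^ (r / p)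
        ≤ α l ^ r * (((k l : ℝ) ^ (1 - p / 2) / (l : ℝ) ^ (p / 2)) ^ (r / p)) :=
          mul_le_mul_of_nonneg_left hjb (hαnonneg l hl)
      _ = 1 := heq
  have hJlej : ∀ i : ℕ, (J (i + 1) : ℝ) ≤ (j : ℝ) :=
    fun i => le_hasSum hJsum i (fun i' _ => by positivity)
  have htail : ∀ m : ℕ, α (l + m) ^ r * (J (l + m) : ℝ) ^ (r / p) ≤ (1/2 : ℝ) ^ m := by
    intro m
    have hJ : (J (l + m) : ℝ) ≤ (j : ℝ) := by
      have h := hJlej (l + m - 1)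
      have : l + m - 1 + 1 = l + m := by omega
      rwa [this] at h
    have h1' : (J (l + m) : ℝ) ^ (r / p) ≤ (j : ℝ) ^ (r / p) :=
      Real.rpow_le_rpow (by positivity) hJ hrp.le
    calc α (l + m) ^ r * (J (l + m) : ℝ) ^ (r / p)
        ≤ α (l + m) ^ r * (j : ℝ) ^ (r / p) :=
          mul_le_mul_of_nonneg_left h1' (hαnonneg _ (by omega))
      _ ≤ (α l ^ r * (1/2 : ℝ) ^ m) * (j : ℝ) ^ (r / p) :=
          mul_le_mul_of_nonneg_right (hdecay m) (by positivity)
      _ = (α l ^ r * (j : ℝ) ^ (r / p)) * (1/2 : ℝ) ^ m := by ring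
      _ ≤ 1 * (1/2 : ℝ) ^ m := mul_le_mul_of_nonneg_right hαl (by positivity)
      _ = (1/2 : ℝ) ^ m := one_mul _
  have hsmall : ∀ n : ℕ, 1 ≤ n →
      α n ^ r * (J n : ℝ) ^ (r / p) ≤ (n : ℝ) ^ (r / 2) * (k n : ℝ) ^ (r / 2) := by
    intro n hn
    have hJ : (J n : ℝ) ≤ (k n : ℝ) := by exact_mod_cast hJk n hn
    have h1' : (J n : ℝ) ^ (r / p) ≤ (k n : ℝ) ^ (r / p) :=
      Real.rpow_le_rpow (by positivity) hJ hrp.le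
    calc α n ^ r * (J n : ℝ) ^ (r / p)
        ≤ α n ^ r * (k n : ℝ) ^ (r / p) :=
          mul_le_mul_of_nonneg_left h1' (hαnonneg n hn)
      _ = (n : ℝ) ^ (r / 2) * (k n : ℝ) ^ (r / 2) := by
          rw [hαr n hn, mul_assoc, ← Real.rpow_add (hkpos n), h1]
  set f : ℕ → ℝ := fun i => α (i + 1) ^ r * (J (i + 1) : ℝ) ^ (r / p) with hf
  have hfnonneg : ∀ i, 0 ≤ f i := fun i =>
    mul_nonneg (hαnonneg _ (by omega)) (Real.rpow_nonneg (by positivity) _)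
  have htail' : ∀ i : ℕ, f (i + (l - 1)) ≤ (1/2 : ℝ) ^ i := by
    intro i
    have hidx : i + (l - 1) + 1 = l + i := by omega
    show α (i + (l - 1) + 1) ^ r * (J (i + (l - 1) + 1) : ℝ) ^ (r / p) ≤ (1/2 : ℝ) ^ i
    rw [hidx]
    exact htail i
  have hgeo : Summable (fun i : ℕ => (1/2 : ℝ) ^ i) :=
    summable_geometric_of_lt_one (by norm_num) (by norm_num)
  have hsummable_tail : Summable (fun i => f (i + (l - 1))) :=
    Summable.of_nonneg_of_le (fun i => hfnonneg _) htail' hgeo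
  have hsummable : Summable f := (summable_nat_add_iff (l - 1)).mp hsummable_tail
  have hsplit := Summable.sum_add_tsum_nat_add (l - 1) hsummable
  have hS : ∑ i ∈ Finset.range (l - 1), f i ≤ (j : ℝ) / 2 := by
    have hb : ∑ i ∈ Finset.range (l - 1), f i
        ≤ ∑ i ∈ Finset.range (l - 1), ((i : ℝ) + 1) ^ (r / 2) * (k (i + 1) : ℝ) ^ (r / 2) := by
      apply Finset.sum_le_sum
      intro i _
      have h := hsmall (i + 1) (by omega)
      push_cast at h ⊢
      exact h
    have heqS : ∑ i ∈ Finset.Icc 1 (l - 1), (i : ℝ) ^ (r / 2) * (k i : ℝ) ^ (r / 2)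
        = ∑ i ∈ Finset.range (l - 1), ((i : ℝ) + 1) ^ (r / 2) * (k (i + 1) : ℝ) ^ (r / 2) := by
      rw [← Finset.Ico_add_one_right_eq_Icc, Finset.sum_Ico_eq_sum_range]
      apply Finset.sum_congr
      · congr 1
      · intro i _
        rw [Nat.add_comm 1 i]
        push_cast
        try ring_nf
    rw [heqS] at hj1
    linarith
  have hT : ∑' i, f (i + (l - 1)) ≤ 2 := by
    have h := Summable.tsum_le_tsum htail' hsummable_tail hgeo
    rw [tsum_geometric_of_lt_one (by norm_num) (by norm_num)] at h
    norm_num at h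
    exact h
  calc ∑' i : ℕ, f i = ∑ i ∈ Finset.range (l - 1), f i + ∑' i, f (i + (l - 1)) := hsplit.symm
    _ ≤ (j : ℝ) / 2 + 2 := add_le_add hS hT
    _ ≤ (j : ℝ) / 2 + 3 := by linarith
end

section
/- Let 1 < p < 2 < r < ∞ with r/(r−1) < p, let (k_n) be a sequence of positive integers and (α_n) a sequence of positive reals. Let V be the normed space of finitely supported real arrays a = (a^i_j), where i ranges over ℕ and 1 ≤ j ≤ k_i, equipped with the norm ‖a‖ = max{ (∑_{i,j} |a^i_j|^r)^{1/r}, (∑_i α_i^r (∑_{j=1}^{k_i} |a^i_j|^p)^{r/p})^{1/r} }. Then no normalized sequence (x_n) in V of pairwise disjointly supported arrays is equivalent to the unit vector basis of c_0. -/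
open Filter Topology

lemma real_rpow_add_rpow_le_rpow {a b q : ℝ} (ha : 0 ≤ a) (hb : 0 ≤ b) (hq : 1 ≤ q) :
    a ^ q + b ^ q ≤ (a + b) ^ q := by
  have h := NNReal.add_rpow_le_rpow_add a.toNNReal b.toNNReal hq
  have := NNReal.coe_le_coe.2 h
  simpa [NNReal.coe_rpow, Real.coe_toNNReal a ha, Real.coe_toNNReal b hb,
    Real.coe_toNNReal _ (add_nonneg ha hb)] using this

lemma sum_rpow_le_rpow_sum {ι : Type*} {q : ℝ} (hq : 1 ≤ q) (s : Finset ι) (f : ι → ℝ)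
    (hf : ∀ i ∈ s, 0 ≤ f i) : ∑ i ∈ s, f i ^ q ≤ (∑ i ∈ s, f i) ^ q := by
  induction s using Finset.cons_induction with
  | empty => simp [Real.zero_rpow (by linarith : q ≠ 0)]
  | cons a s ha ih =>
    rw [Finset.sum_cons, Finset.sum_cons]
    have h1 : 0 ≤ f a := hf a (Finset.mem_cons_self _ _)
    have h2 : 0 ≤ ∑ i ∈ s, f i :=
      Finset.sum_nonneg fun i hi => hf i (Finset.mem_cons_of_mem hi)
    calc f a ^ q + ∑ i ∈ s, f i ^ q
        ≤ f a ^ q + (∑ i ∈ s, f i) ^ q := by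
          have := ih (fun i hi => hf i (Finset.mem_cons_of_mem hi)); linarith
      _ ≤ (f a + ∑ i ∈ s, f i) ^ q := real_rpow_add_rpow_le_rpow h1 h2 hq

/-- in the two-norm space of the Example, no normalized disjointly
supported sequence is equivalent to the unit vector basis of `c₀`. -/
theorem statement12 (p r : ℝ) (hp1 : 1 < p) (hp2 : p < 2) (hr2 : 2 < r)
    (hrp : r / (r - 1) < p)
    (k : ℕ → ℕ) (hk : ∀ i, 0 < k i)
    (α : ℕ → ℝ) (hα : ∀ i, 0 < α i)
    (N : ((Σ i : ℕ, Fin (k i)) →₀ ℝ) → ℝ)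
    (hN : ∀ a : (Σ i : ℕ, Fin (k i)) →₀ ℝ,
      N a = max ((∑ ij ∈ a.support, |a ij| ^ r) ^ (1 / r))
        ((∑ i ∈ a.support.image Sigma.fst,
            α i ^ r * (∑ j : Fin (k i), |a ⟨i, j⟩| ^ p) ^ (r / p)) ^ (1 / r)))
    (x : ℕ → ((Σ i : ℕ, Fin (k i)) →₀ ℝ))
    (hnorm : ∀ n, N (x n) = 1)
    (hdisj : ∀ m n, m ≠ n → Disjoint (x m).support (x n).support) :
    ¬ ∃ C₁ C₂ : ℝ, ∀ (s : Finset ℕ) (a : ℕ → ℝ),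
      N (∑ n ∈ s, a n • x n) ≤ C₁ * ((s.sup fun n => ‖a n‖₊ : NNReal) : ℝ) ∧
      ((s.sup fun n => ‖a n‖₊ : NNReal) : ℝ) ≤ C₂ * N (∑ n ∈ s, a n • x n) := by
  rintro ⟨C₁, C₂, hC⟩
  have hr0 : (0 : ℝ) < r := by linarith
  have hp0 : (0 : ℝ) < p := by linarith
  have hrp1 : 1 ≤ r / p := by rw [le_div_iff₀ hp0]; linarith
  set A1 : ((Σ i : ℕ, Fin (k i)) →₀ ℝ) → ℝ :=
    fun v => ∑ ij ∈ v.support, |v ij| ^ r with hA1def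
  set A2 : ((Σ i : ℕ, Fin (k i)) →₀ ℝ) → ℝ :=
    fun v => ∑ i ∈ v.support.image Sigma.fst,
      α i ^ r * (∑ j : Fin (k i), |v ⟨i, j⟩| ^ p) ^ (r / p) with hA2def
  have hA1nn : ∀ v, 0 ≤ A1 v := fun v =>
    Finset.sum_nonneg fun ij _ => Real.rpow_nonneg (abs_nonneg _) _
  have hA2nn : ∀ v, 0 ≤ A2 v := fun v =>
    Finset.sum_nonneg fun i _ => mul_nonneg (Real.rpow_nonneg (hα i).le _)
      (Real.rpow_nonneg (Finset.sum_nonneg fun j _ => Real.rpow_nonneg (abs_nonneg _) _) _)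
  have hNmax : ∀ v, N v = max (A1 v ^ (1 / r)) (A2 v ^ (1 / r)) := fun v => hN v
  -- Step D : A1 (x n) + A2 (x n) ≥ 1
  have hone : ∀ n, 1 ≤ A1 (x n) + A2 (x n) := by
    intro n
    have h := (hNmax (x n)).symm.trans (hnorm n)
    have key : ∀ v : ((Σ i : ℕ, Fin (k i)) →₀ ℝ), ∀ A : ℝ, 0 ≤ A → A ^ (1 / r) = 1 → A = 1 := by
      intro _ A hA hA1
      have : (A ^ (1 / r)) ^ r = A := by
        rw [← Real.rpow_mul hA, one_div, inv_mul_cancel₀ hr0.ne', Real.rpow_one]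
      rw [hA1, Real.one_rpow] at this
      linarith
    rcases max_choice (A1 (x n) ^ (1 / r)) (A2 (x n) ^ (1 / r)) with hm | hm <;>
      rw [hm] at h
    · have := key (x n) _ (hA1nn (x n)) h
      have := hA2nn (x n); linarith
    · have := key (x n) _ (hA2nn (x n)) h
      have := hA1nn (x n); linarith
  -- main estimate for s = range m
  have main : ∀ m : ℕ, 0 < m → ((m : ℝ) / 2) ^ (1 / r) ≤ N (∑ n ∈ Finset.range m, x n) := by
    intro m hm
    set s : Finset ℕ := Finset.range m with hs
    set y : ((Σ i : ℕ, Fin (k i)) →₀ ℝ) := ∑ n ∈ s, x n with hy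
    have hsupp : y.support = s.biUnion fun n => (x n).support :=
      Finsupp.support_sum_eq_biUnion _ fun i j hij => hdisj i j hij
    have happly : ∀ ij, y ij = ∑ n ∈ s, x n ij := fun ij =>
      Finsupp.finset_sum_apply s x ij
    -- A1 additivity
    have hA1eq : A1 y = ∑ n ∈ s, A1 (x n) := by
      rw [hA1def]
      simp only
      rw [hsupp, Finset.sum_biUnion (fun a _ b _ hab => hdisj a b hab)]
      refine Finset.sum_congr rfl fun n hn => Finset.sum_congr rfl fun ij hij => ?_
      congr 2
      rw [happly ij]
      refine Finset.sum_eq_single_of_mem n hn fun m hms hmn => ?_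
      by_contra h
      exact (Finset.disjoint_left.1 (hdisj m n hmn)) (Finsupp.mem_support_iff.2 h) hij
    -- pointwise splitting for A2
    have hpt : ∀ (i : ℕ) (j : Fin (k i)),
        |y ⟨i, j⟩| ^ p = ∑ n ∈ s, |x n ⟨i, j⟩| ^ p := by
      intro i j
      by_cases hex : ∃ n ∈ s, x n ⟨i, j⟩ ≠ 0
      · obtain ⟨n0, hn0, hne⟩ := hex
        have hz : ∀ m ∈ s, m ≠ n0 → x m ⟨i, j⟩ = 0 := by
          intro m hms hmn
          by_contra h
          exact (Finset.disjoint_left.1 (hdisj m n0 hmn)) (Finsupp.mem_support_iff.2 h)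
            (Finsupp.mem_support_iff.2 hne)
        rw [happly, Finset.sum_eq_single_of_mem n0 hn0 hz,
          Finset.sum_eq_single_of_mem n0 hn0 fun m hms hmn => by
            rw [hz m hms hmn, abs_zero, Real.zero_rpow hp0.ne']]
      · push_neg at hex
        rw [happly, Finset.sum_eq_zero hex, abs_zero, Real.zero_rpow hp0.ne']
        exact (Finset.sum_eq_zero fun n hn => by
          rw [hex n hn, abs_zero, Real.zero_rpow hp0.ne']).symm
    -- A2 superadditivity
    have htnn : ∀ (n : ℕ) (i : ℕ), 0 ≤ ∑ j : Fin (k i), |x n ⟨i, j⟩| ^ p := fun n i =>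
      Finset.sum_nonneg fun j _ => Real.rpow_nonneg (abs_nonneg _) _
    have hA2ge : ∑ n ∈ s, A2 (x n) ≤ A2 y := by
      have hsub : ∀ n ∈ s, (x n).support.image Sigma.fst ⊆ y.support.image Sigma.fst := by
        intro n hn
        apply Finset.image_subset_image
        rw [hsupp]
        exact Finset.subset_biUnion_of_mem (fun n => (x n).support) hn
      calc ∑ n ∈ s, A2 (x n)
          ≤ ∑ n ∈ s, ∑ i ∈ y.support.image Sigma.fst,
              α i ^ r * (∑ j : Fin (k i), |x n ⟨i, j⟩| ^ p) ^ (r / p) := by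
            refine Finset.sum_le_sum fun n hn => ?_
            refine Finset.sum_le_sum_of_subset_of_nonneg (hsub n hn) fun i _ _ =>
              mul_nonneg (Real.rpow_nonneg (hα i).le _) (Real.rpow_nonneg (htnn n i) _)
        _ = ∑ i ∈ y.support.image Sigma.fst,
              α i ^ r * ∑ n ∈ s, (∑ j : Fin (k i), |x n ⟨i, j⟩| ^ p) ^ (r / p) := by
            rw [Finset.sum_comm]
            exact Finset.sum_congr rfl fun i _ => (Finset.mul_sum _ _ _).symm
        _ ≤ ∑ i ∈ y.support.image Sigma.fst,
              α i ^ r * (∑ n ∈ s, ∑ j : Fin (k i), |x n ⟨i, j⟩| ^ p) ^ (r / p) := by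
            refine Finset.sum_le_sum fun i _ => ?_
            exact mul_le_mul_of_nonneg_left
              (sum_rpow_le_rpow_sum hrp1 s _ fun n _ => htnn n i)
              (Real.rpow_nonneg (hα i).le _)
        _ = A2 y := by
            rw [hA2def]
            refine Finset.sum_congr rfl fun i _ => ?_
            congr 2
            rw [Finset.sum_comm]
            exact (Finset.sum_congr rfl fun j _ => hpt i j).symm
    -- combine
    have hsum : (m : ℝ) ≤ ∑ n ∈ s, A1 (x n) + ∑ n ∈ s, A2 (x n) := by
      rw [← Finset.sum_add_distrib]
      calc (m : ℝ) = ∑ _n ∈ s, (1 : ℝ) := by simp [hs]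
        _ ≤ _ := Finset.sum_le_sum fun n _ => hone n
    have hNy : N y = max (A1 y ^ (1 / r)) (A2 y ^ (1 / r)) := hNmax y
    have h1r : (0 : ℝ) < 1 / r := by positivity
    rcases le_total (∑ n ∈ s, A1 (x n)) (∑ n ∈ s, A2 (x n)) with hle | hle
    · have : (m : ℝ) / 2 ≤ A2 y := by linarith
      calc ((m : ℝ) / 2) ^ (1 / r) ≤ A2 y ^ (1 / r) :=
            Real.rpow_le_rpow (by positivity) this h1r.le
        _ ≤ N y := by rw [hNy]; exact le_max_right _ _
    · have : (m : ℝ) / 2 ≤ A1 y := by rw [hA1eq]; linarith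
      calc ((m : ℝ) / 2) ^ (1 / r) ≤ A1 y ^ (1 / r) :=
            Real.rpow_le_rpow (by positivity) this h1r.le
        _ ≤ N y := by rw [hNy]; exact le_max_left _ _
  -- derive contradiction
  set B : ℝ := max C₁ 1 with hB
  have hB1 : (1 : ℝ) ≤ B := le_max_right _ _
  have hB0 : (0 : ℝ) < B := by linarith
  set m : ℕ := ⌈2 * B ^ r⌉₊ + 1 with hm
  have hm0 : 0 < m := Nat.succ_pos _
  have hmB : B ^ r < (m : ℝ) / 2 := by
    have h1 : 2 * B ^ r ≤ (⌈2 * B ^ r⌉₊ : ℝ) := Nat.le_ceil _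
    have h2 : (m : ℝ) = (⌈2 * B ^ r⌉₊ : ℝ) + 1 := by exact_mod_cast rfl
    have hBr : 0 < B ^ r := Real.rpow_pos_of_pos hB0 r
    rw [h2]; linarith
  have hlt : B < ((m : ℝ) / 2) ^ (1 / r) := by
    have := Real.rpow_lt_rpow (Real.rpow_nonneg hB0.le r) hmB (by positivity : (0:ℝ) < 1 / r)
    rwa [← Real.rpow_mul hB0.le, mul_one_div, div_self hr0.ne', Real.rpow_one] at this
  have hCm := (hC (Finset.range m) fun _ => (1 : ℝ)).1
  have hsimp : (∑ n ∈ Finset.range m, (1 : ℝ) • x n) = ∑ n ∈ Finset.range m, x n := by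
    simp [one_smul]
  have hsup : (((Finset.range m).sup fun _n => ‖(1 : ℝ)‖₊ : NNReal) : ℝ) = 1 := by
    rw [Finset.sup_const (Finset.nonempty_range_iff.2 hm0.ne') _]
    simp
  rw [hsimp, hsup, mul_one] at hCm
  have := main m hm0
  have hCB : C₁ ≤ B := le_max_left _ _
  linarith
end
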